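/- arXiv:2109.13688 — 3 statements merged into one kernel-verified Lean document; each statement's English description precedes it below -/
import Mathlib

section
/- The unilateral shift S on ℓ²(ℕ), defined by (Sx)(n+1) = x(n) and (Sx)(0) = 0, has no square root: there is no bounded operator A on ℓ²(ℕ) with A² = S. -/
/-!
The range of the shift is the kernel of `x ↦ x 0`, a coatom of the submodule lattice. If `A * A = S`,
then `A` is injective and `range S = A '' range A ≤ range A`, so `range A` is `range S` or `⊤`. In
the first case `A '' ⊤ = A '' range A` and injectivity give `range A = ⊤` anyway, and then
`range S = A '' ⊤ = ⊤`, a contradiction.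
-/

open Function

theorem Memℓp.comp_injective {α β E : Type*} [NormedAddCommGroup E] {p : ENNReal}
    {f : α → E} (hf : Memℓp f p) {g : β → α} (hg : Injective g) : Memℓp (f ∘ g) p := by
  rcases p.trichotomy with rfl | rfl | hp
  · exact memℓp_zero ((memℓp_zero_iff.1 hf).preimage hg.injOn)
  · exact memℓp_infty <|
      (memℓp_infty_iff.1 hf).mono (Set.range_comp_subset_range g fun i => ‖f i‖)
  · exact memℓp_gen (((memℓp_gen_iff hp).1 hf).comp_injective hg)

namespace LinearMap

theorem not_isCoatom_range_mul_self {R M : Type*} [Semiring R] [AddCommMonoid M] [Module R M]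
    {A : Module.End R M} (hA : Injective A) : ¬ IsCoatom (range (A * A)) := by
  intro hcoatom
  have hrange : range (A * A) = (range A).map A := by
    rw [Module.End.mul_eq_comp, range_comp]
  have hA_top : range A = ⊤ := by
    rcases hcoatom.le_iff.1 (range_comp_le_range A A) with h | h
    · exact h
    · rw [range_eq_map, hrange] at h
      exact (Submodule.map_injective_of_injective hA h).symm
  exact hcoatom.1 (by rw [hrange, hA_top, ← range_eq_map, hA_top])

end LinearMap

theorem lp.range_shift_eq_ker_evalₗ_zero {𝕜 E : Type*} [NormedRing 𝕜] [NormedAddCommGroup E]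
    [Module 𝕜 E] [NormSMulClass 𝕜 E] {p : ENNReal} [Fact (1 ≤ p)]
    (S : lp (fun _ : ℕ => E) p →ₗ[𝕜] lp (fun _ : ℕ => E) p)
    (hS1 : ∀ x n, (S x : ℕ → E) (n + 1) = (x : ℕ → E) n) (hS0 : ∀ x, (S x : ℕ → E) 0 = 0) :
    LinearMap.range S = LinearMap.ker (lp.evalₗ (fun _ : ℕ => E) p 0 : _ →ₗ[𝕜] E) := by
  ext y
  refine ⟨?_, fun hy => ?_⟩
  · rintro ⟨x, rfl⟩
    exact hS0 x
  · refine ⟨⟨_, (lp.memℓp y).comp_injective (g := Nat.succ) Nat.succ_injective⟩, lp.ext ?_⟩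
    funext n
    cases n with
    | zero => exact (hS0 _).trans hy.symm
    | succ n => exact hS1 _ n

theorem lp.injective_of_apply_succ {E : Type*} [NormedAddCommGroup E] {p : ENNReal}
    {S : lp (fun _ : ℕ => E) p → lp (fun _ : ℕ => E) p}
    (hS1 : ∀ x n, (S x : ℕ → E) (n + 1) = (x : ℕ → E) n) : Injective S :=
  fun x y hxy => lp.ext <| funext fun n => by rw [← hS1 x, ← hS1 y, hxy]

theorem stmt_7 (S : lp (fun _ : ℕ => ℂ) 2 →L[ℂ] lp (fun _ : ℕ => ℂ) 2)
    (hS1 : ∀ (x : lp (fun _ : ℕ => ℂ) 2) (n : ℕ), (S x : ∀ _ : ℕ, ℂ) (n + 1) = (x : ∀ _ : ℕ, ℂ) n)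
    (hS0 : ∀ x : lp (fun _ : ℕ => ℂ) 2, (S x : ∀ _ : ℕ, ℂ) 0 = 0) :
    ¬ ∃ A : lp (fun _ : ℕ => ℂ) 2 →L[ℂ] lp (fun _ : ℕ => ℂ) 2, A * A = S := by
  rintro ⟨A, rfl⟩
  have hA_inj : Injective A := (lp.injective_of_apply_succ hS1).of_comp (f := A)
  have heval_surj : Surjective (lp.evalₗ (fun _ : ℕ => ℂ) 2 0 : _ →ₗ[ℂ] ℂ) :=
    fun c => ⟨lp.single 2 0 c, lp.single_apply_self (E := fun _ : ℕ => ℂ) 2 0 c⟩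
  apply LinearMap.not_isCoatom_range_mul_self (A := (A : lp (fun _ : ℕ => ℂ) 2 →ₗ[ℂ] _)) hA_inj
  rw [← ContinuousLinearMap.toLinearMap_mul, lp.range_shift_eq_ker_evalₗ_zero _ hS1 hS0]
  exact LinearMap.isCoatom_ker_of_surjective heval_surj
end

section
/- The function f(z) = 1 + z + exp((z+1)/(z-1)) on the open unit disk has real part bounded below by a positive constant, and in particular f has no zeros in the disk. -/
/-!
Write `w = (z + 1) / (z - 1)`, so that `Re Θ(z) = exp (Re w) * cos (Im w)`. One has
`Re w = (|z|² - 1) / |z - 1|² ≤ 0`, `-Re w ≤ (1 + Re z) / (1 - Re z)`, and, by AM-GM,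
`|Im w| ≤ 1 / (1 - Re z)`. Hence `Re Θ ≥ -1` on the disk, `Re Θ ≥ 0` when `Re z ≤ 1/3`
(then `|Im w| ≤ 3/2 < π/2`), and `Re Θ ≥ 14/27` when `Re z ≤ -1/2`. In each of the three
ranges of `Re z` this gives `Re (1 + z + Θ z) ≥ 1/3`.
-/

open Complex

lemma re_add_one_div_sub_one (z : ℂ) :
    ((z + 1) / (z - 1)).re = (normSq z - 1) / normSq (z - 1) := by
  rw [div_re, ← add_div]
  congr 1
  simp only [normSq_apply, add_re, add_im, sub_re, sub_im, one_re, one_im]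
  ring

lemma im_add_one_div_sub_one (z : ℂ) :
    ((z + 1) / (z - 1)).im = -2 * z.im / normSq (z - 1) := by
  rw [div_im, ← sub_div]
  congr 1
  simp only [add_re, add_im, sub_re, sub_im, one_re, one_im]
  ring

lemma normSq_sub_one_pos_of_re_lt_one {z : ℂ} (hz : z.re < 1) : 0 < normSq (z - 1) := by
  rw [normSq_apply]
  simp only [sub_re, sub_im, one_re, one_im, sub_zero]
  nlinarith [sq_nonneg z.im]

lemma re_add_one_div_sub_one_nonpos {z : ℂ} (hz : ‖z‖ ≤ 1) : ((z + 1) / (z - 1)).re ≤ 0 := by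
  rw [re_add_one_div_sub_one, normSq_eq_norm_sq z]
  exact div_nonpos_of_nonpos_of_nonneg (by nlinarith [norm_nonneg z]) (normSq_nonneg _)

lemma neg_re_add_one_div_sub_one_le {z : ℂ} (hz : z.re < 1) :
    -((z + 1) / (z - 1)).re ≤ (1 + z.re) / (1 - z.re) := by
  have hpos := normSq_sub_one_pos_of_re_lt_one hz
  rw [re_add_one_div_sub_one, ← neg_div, div_le_div_iff₀ hpos (by linarith)]
  simp only [normSq_apply, sub_re, sub_im, one_re, one_im, sub_zero] at hpos ⊢
  nlinarith [sq_nonneg z.im]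

lemma abs_im_add_one_div_sub_one_le {z : ℂ} (hz : z.re < 1) :
    |((z + 1) / (z - 1)).im| ≤ 1 / (1 - z.re) := by
  have hpos := normSq_sub_one_pos_of_re_lt_one hz
  rw [im_add_one_div_sub_one, abs_div, abs_of_pos hpos, abs_mul, div_le_div_iff₀ hpos (by linarith)]
  simp only [normSq_apply, sub_re, sub_im, one_re, one_im, sub_zero, abs_neg, abs_two]
  nlinarith [sq_nonneg (|z.im| - (1 - z.re)), sq_abs z.im]

lemma neg_one_le_re_exp_add_one_div_sub_one {z : ℂ} (hz : ‖z‖ ≤ 1) :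
    -1 ≤ (exp ((z + 1) / (z - 1))).re := by
  have h := abs_re_le_norm (exp ((z + 1) / (z - 1)))
  rw [norm_exp] at h
  have := Real.exp_le_one_iff.mpr (re_add_one_div_sub_one_nonpos hz)
  linarith [neg_abs_le (exp ((z + 1) / (z - 1))).re]

lemma re_exp_add_one_div_sub_one_nonneg {z : ℂ} (hz : z.re ≤ 1 / 3) :
    0 ≤ (exp ((z + 1) / (z - 1))).re := by
  rw [exp_re]
  refine mul_nonneg (Real.exp_pos _).le (Real.cos_nonneg_of_mem_Icc (abs_le.mp ?_))
  calc |((z + 1) / (z - 1)).im| ≤ 1 / (1 - z.re) := abs_im_add_one_div_sub_one_le (by linarith)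
    _ ≤ 3 / 2 := by rw [div_le_iff₀ (by linarith)]; linarith
    _ ≤ Real.pi / 2 := by linarith [Real.pi_gt_three]

lemma le_re_exp_add_one_div_sub_one {z : ℂ} (hz : z.re ≤ -1 / 2) :
    14 / 27 ≤ (exp ((z + 1) / (z - 1))).re := by
  set w := (z + 1) / (z - 1)
  have hre : -(1 / 3) ≤ w.re := by
    have h := neg_re_add_one_div_sub_one_le (z := z) (by linarith)
    have : (1 + z.re) / (1 - z.re) ≤ 1 / 3 := by rw [div_le_iff₀ (by linarith)]; linarith
    linarith
  have him : |w.im| ≤ 2 / 3 := by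
    calc |w.im| ≤ 1 / (1 - z.re) := abs_im_add_one_div_sub_one_le (by linarith)
      _ ≤ 2 / 3 := by rw [div_le_iff₀ (by linarith)]; linarith
  have hexp : 2 / 3 ≤ Real.exp w.re := by linarith [Real.add_one_le_exp w.re]
  have hcos : 7 / 9 ≤ Real.cos w.im := by
    have : w.im ^ 2 ≤ 4 / 9 := by nlinarith [sq_abs w.im, abs_nonneg w.im]
    linarith [Real.one_sub_sq_div_two_le_cos (x := w.im)]
  rw [exp_re]
  calc (14 / 27 : ℝ) = 2 / 3 * (7 / 9) := by norm_num
    _ ≤ Real.exp w.re * Real.cos w.im := mul_le_mul hexp hcos (by norm_num) (Real.exp_pos _).le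

lemma one_third_le_re_one_add_add_exp {z : ℂ} (hz : ‖z‖ < 1) :
    1 / 3 ≤ (1 + z + exp ((z + 1) / (z - 1))).re := by
  have hre : -1 < z.re := by linarith [neg_abs_le z.re, abs_re_le_norm z]
  rw [add_re, add_re, one_re]
  rcases le_or_gt z.re (-1 / 2) with h | h
  · linarith [le_re_exp_add_one_div_sub_one h]
  rcases le_or_gt z.re (1 / 3) with h' | h'
  · linarith [re_exp_add_one_div_sub_one_nonneg h']
  · linarith [neg_one_le_re_exp_add_one_div_sub_one hz.le]

open Metric in
theorem stmt_11 :
    ∃ m : ℝ, 0 < m ∧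
      (∀ z ∈ ball (0 : ℂ) 1, m ≤ (1 + z + Complex.exp ((z + 1) / (z - 1))).re) ∧
      ∀ z ∈ ball (0 : ℂ) 1, 1 + z + Complex.exp ((z + 1) / (z - 1)) ≠ 0 := by
  have key : ∀ z ∈ ball (0 : ℂ) 1, 1 / 3 ≤ (1 + z + exp ((z + 1) / (z - 1))).re :=
    fun z hz ↦ one_third_le_re_one_add_add_exp (mem_ball_zero_iff.mp hz)
  refine ⟨1 / 3, by norm_num, key, fun z hz h ↦ ?_⟩
  have := key z hz
  rw [h, zero_re] at this
  norm_num at this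
end

section
/- Formally, (A²)_{ij} = 1/(i+1) for i ≥ j: the matrix A with A_{ij} = binom(i,j) Σ_{ℓ=0}^{i-j} (-1)^ℓ (ℓ+j+1)^{-1/2} binom(i-j,ℓ) (and 0 for i<j) squares to the Cesàro matrix C with C_{ij} = 1/(i+1) for i ≥ j and 0 otherwise, where the matrix product is the finite sum Σ_{k=j}^{i} A_{ik} A_{kj}. -/
/-- The entries of the lower-triangular square root of the Cesàro matrix. -/
noncomputable def cesaroRootEntry (i j : ℕ) : ℝ :=
  if j ≤ i then
    (Nat.choose i j : ℝ) *
      ∑ l ∈ Finset.range (i - j + 1),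
        (-1 : ℝ) ^ l * (1 / Real.sqrt ((l : ℝ) + j + 1)) * (Nat.choose (i - j) l : ℝ)
  else 0

/-!
With `Δ` the signed Pascal matrix `Δ i k = (-1)^k C(i,k)`, which is an involution, the matrix
`cesaroRootEntry` is the Hausdorff matrix `Δ diag(μ) Δ` with moments `μ k = (k+1)^(-1/2)`.
Hausdorff matrices multiply by multiplying their moments, so its square is `Δ diag(1/(k+1)) Δ`,
and that is the Cesàro matrix because `∑ₗ (-1)^l C(n,l) / (j+l+1) = n! j! / (n+j+1)!`,
which is `(-1)^n` times the `n`-th forward difference of `x ↦ 1/(x+1)` at `j`.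
All matrices involved are lower triangular, so the entry `(i, j)` of a product only involves
indices `≤ i` and can be computed in `Matrix (Fin (i+1)) (Fin (i+1))`.
-/

open Finset Nat Matrix

section CommRing

variable {R : Type*} [CommRing R]

theorem sum_range_neg_one_pow_mul_choose_mul_choose (μ : ℕ → R) {i n : ℕ} (hi : i < n)
    (j : ℕ) :
    ∑ k ∈ range n, (-1) ^ k * (i.choose k : R) * μ k * ((-1) ^ j * k.choose j)
      = i.choose j * ∑ l ∈ range (i - j + 1), (-1) ^ l * μ (j + l) * (i - j).choose l := by
  rw [← sum_subset (range_subset_range.2 hi) fun k _ hk ↦ by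
    simp [choose_eq_zero_of_lt (not_lt.1 (mem_range.not.1 hk))]]
  rcases le_or_gt j i with hj | hj
  · rw [← sum_range_add_sum_Ico _ (by omega : j ≤ i + 1), sum_Ico_eq_sum_range, mul_sum,
      sum_eq_zero fun k hk ↦ by simp [choose_eq_zero_of_lt (mem_range.1 hk)], zero_add,
      show i + 1 - j = i - j + 1 by omega]
    refine sum_congr rfl fun l _ ↦ ?_
    have hchoose : (i.choose (j + l) * (j + l).choose j : R) = i.choose j * (i - j).choose l := by
      rw_mod_cast [choose_mul (Nat.le_add_right j l), Nat.add_sub_cancel_left]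
    have hsign : (-1 : R) ^ j * (-1) ^ j = 1 := by rw [← mul_pow]; norm_num
    rw [pow_add]
    linear_combination (-1) ^ l * μ (j + l) * (i.choose (j + l) * (j + l).choose j : R) * hsign +
      (-1) ^ l * μ (j + l) * hchoose
  · rw [choose_eq_zero_of_lt hj, Nat.cast_zero, zero_mul]
    exact sum_eq_zero fun k hk ↦ by simp [choose_eq_zero_of_lt ((mem_range.1 hk).trans_le hj)]

variable (R) in
def signedPascal (n : ℕ) : Matrix (Fin n) (Fin n) R :=
  of fun i k ↦ (-1) ^ (k : ℕ) * ((i : ℕ).choose k : R)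

def hausdorffMatrix (n : ℕ) (μ : ℕ → R) : Matrix (Fin n) (Fin n) R :=
  signedPascal R n * diagonal (fun k : Fin n ↦ μ k) * signedPascal R n

theorem hausdorffMatrix_apply {n : ℕ} (μ : ℕ → R) (i j : Fin n) :
    hausdorffMatrix n μ i j = (i : ℕ).choose j *
      ∑ l ∈ range (i - j + 1), (-1) ^ l * μ (j + l) * (i - j : ℕ).choose l := by
  rw [← sum_range_neg_one_pow_mul_choose_mul_choose μ i.isLt, hausdorffMatrix, mul_apply]
  simp only [mul_diagonal, signedPascal, of_apply]
  exact Fin.sum_univ_eq_sum_range (fun k ↦ (-1) ^ k * ((i : ℕ).choose k : R) * μ k *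
    ((-1) ^ (j : ℕ) * (k.choose j : R))) n

theorem signedPascal_mul_self (n : ℕ) : signedPascal R n * signedPascal R n = 1 := by
  ext i j
  have h := hausdorffMatrix_apply (fun _ ↦ (1 : R)) i j
  rw [hausdorffMatrix, diagonal_one, Matrix.mul_one] at h
  simp only [mul_one] at h
  rw [h, one_apply]
  have halt := congrArg (Int.cast : ℤ → R) (Int.alternating_sum_range_choose (n := i - j))
  push_cast at halt
  rw [halt]
  rcases lt_trichotomy (i : ℕ) j with hij | hij | hij
  · simp [choose_eq_zero_of_lt hij, Fin.ne_of_lt hij]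
  · simp [Fin.ext hij]
  · simp [Nat.sub_ne_zero_of_lt hij, Fin.ne_of_gt hij]

theorem hausdorffMatrix_mul (n : ℕ) (μ ν : ℕ → R) :
    hausdorffMatrix n μ * hausdorffMatrix n ν = hausdorffMatrix n (μ * ν) := by
  simp only [hausdorffMatrix, Matrix.mul_assoc]
  rw [← Matrix.mul_assoc (signedPascal R n) (signedPascal R n), signedPascal_mul_self,
    Matrix.one_mul, ← Matrix.mul_assoc (diagonal _), diagonal_mul_diagonal]
  rfl

end CommRing

section Field

variable {K : Type*} [Field K] [CharZero K]

theorem fwdDiff_iter_one_div_add_one (n j : ℕ) :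
    (fwdDiff 1)^[n] (fun x : ℕ ↦ 1 / ((x : K) + 1)) j
      = (-1) ^ n * (n ! * j ! / (n + j + 1)! : K) := by
  induction n generalizing j with
  | zero =>
    have hj : (j ! : K) ≠ 0 := by exact_mod_cast factorial_ne_zero j
    simp [factorial_succ, field]
  | succ n ih =>
    rw [Function.iterate_succ_apply', fwdDiff, ih, ih,
      show n + (j + 1) + 1 = n + j + 1 + 1 by omega, show n + 1 + j + 1 = n + j + 1 + 1 by omega,
      factorial_succ (n + j + 1), factorial_succ j, factorial_succ n]
    have hsucc : ((n + j + 1 + 1 : ℕ) : K) ≠ 0 := Nat.cast_ne_zero.2 (succ_ne_zero _)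
    push_cast [pow_succ] at hsucc ⊢
    field_simp
    ring

theorem sum_range_neg_one_pow_mul_one_div_mul_choose (n j : ℕ) :
    ∑ l ∈ range (n + 1), (-1 : K) ^ l * (1 / (((j + l : ℕ) : K) + 1)) * n.choose l
      = n ! * j ! / (n + j + 1)! := calc
  _ = (-1) ^ n * (fwdDiff 1)^[n] (fun x : ℕ ↦ 1 / ((x : K) + 1)) j := by
    rw [fwdDiff_iter_eq_sum_shift, mul_sum]
    refine sum_congr rfl fun l hl ↦ ?_
    have hsign : (-1 : K) ^ n * (-1) ^ (n - l) = (-1) ^ l := by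
      rw [← pow_add, show n + (n - l) = l + 2 * (n - l) by grind, pow_add, pow_mul]
      norm_num
    rw [← hsign, zsmul_eq_mul, smul_eq_mul, mul_one]
    push_cast
    ring
  _ = n ! * j ! / (n + j + 1)! := by
    rw [fwdDiff_iter_one_div_add_one, ← mul_assoc, ← pow_add, ← two_mul, pow_mul]
    norm_num

variable (K) in
def cesaroMatrix (n : ℕ) : Matrix (Fin n) (Fin n) K :=
  of fun i j ↦ if j ≤ i then 1 / ((i : K) + 1) else 0

theorem hausdorffMatrix_one_div_add_one (n : ℕ) :
    hausdorffMatrix n (fun k ↦ 1 / ((k : K) + 1)) = cesaroMatrix K n := by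
  ext i j
  rw [hausdorffMatrix_apply, sum_range_neg_one_pow_mul_one_div_mul_choose, cesaroMatrix, of_apply]
  split_ifs with hji
  · rw [show (i : ℕ) - j + j + 1 = i + 1 by omega, cast_choose K (Fin.le_def.1 hji),
      factorial_succ]
    have hfact (m : ℕ) : (m ! : K) ≠ 0 := by exact_mod_cast factorial_ne_zero m
    push_cast
    field_simp [hfact]
  · rw [choose_eq_zero_of_lt (Fin.lt_def.1 (not_le.1 hji)), Nat.cast_zero, zero_mul]

end Field

noncomputable def cesaroRoot (n : ℕ) : Matrix (Fin n) (Fin n) ℝ :=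
  hausdorffMatrix n fun k ↦ 1 / √((k : ℝ) + 1)

theorem cesaroRoot_mul_self (n : ℕ) : cesaroRoot n * cesaroRoot n = cesaroMatrix ℝ n := by
  rw [cesaroRoot, hausdorffMatrix_mul, ← hausdorffMatrix_one_div_add_one]
  congr 1 with k
  rw [Pi.mul_apply, one_div_mul_one_div, Real.mul_self_sqrt (by positivity)]

theorem cesaroRoot_apply {n : ℕ} (i j : Fin n) : cesaroRoot n i j = cesaroRootEntry i j := by
  rw [cesaroRoot, hausdorffMatrix_apply, cesaroRootEntry]
  split_ifs with hji
  · refine congrArg _ (sum_congr rfl fun l _ ↦ ?_)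
    push_cast
    ring_nf
  · rw [choose_eq_zero_of_lt (not_le.1 hji), Nat.cast_zero, zero_mul]

theorem stmt_18 (i j : ℕ) (hij : j ≤ i) :
    ∑ k ∈ Finset.Icc j i, cesaroRootEntry i k * cesaroRootEntry k j
      = 1 / ((i : ℝ) + 1) := by
  calc ∑ k ∈ Icc j i, cesaroRootEntry i k * cesaroRootEntry k j
      = ∑ k ∈ range (i + 1), cesaroRootEntry i k * cesaroRootEntry k j := by
        refine sum_subset (fun k _ ↦ by grind) fun k _ hk ↦ ?_
        exact mul_eq_zero_of_right _ (if_neg (by grind))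
    _ = (cesaroRoot (i + 1) * cesaroRoot (i + 1)) (Fin.last i) ⟨j, by omega⟩ := by
        rw [mul_apply,
          ← Fin.sum_univ_eq_sum_range (fun k ↦ cesaroRootEntry i k * cesaroRootEntry k j)]
        simp only [cesaroRoot_apply, Fin.val_last]
    _ = 1 / ((i : ℝ) + 1) := by
        rw [cesaroRoot_mul_self, cesaroMatrix, of_apply, if_pos (Fin.le_last _), Fin.val_last]
end
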